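/- arXiv:math/0206052 — 6 statements merged into one kernel-verified Lean document; each statement's English description precedes it below -/
import Mathlib

section
/- Let R be a binary relation on a finite set S. Then ‖R‖ = 0 if and only if R fails to be reflexive, i.e., there exists i ∈ S with (i,i) ∉ R. -/
/-!
On the simplex `f_R` is a sum of nonnegative terms, so `‖R‖ ≥ 0`. If `(i,i) ∉ R`, the vertex
`e_i` gives `f_R(e_i) = 0`. If `R` is reflexive, the diagonal terms give `f_R(x) ≥ x_i²` for the
coordinate with `x_i > 0`, so `f_R` is positive on the whole simplex.
-/

open Finset
open scoped Classical

/-- The quadratic form `f_R(x) = Σ_{i,j} R(i,j) x_i x_j` of a binary relation. -/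
noncomputable def quadForm {ι : Type*} [Fintype ι] (R : ι → ι → Prop) (x : ι → ℝ) : ℝ :=
  ∑ i, ∑ j, (if R i j then (1 : ℝ) else 0) * x i * x j

section

variable {ι : Type*} {R : ι → ι → Prop} {x : ι → ℝ}

lemma quadForm_term_nonneg (hx : 0 ≤ x) (i j : ι) :
    0 ≤ (if R i j then (1 : ℝ) else 0) * x i * x j := by
  have : (0 : ℝ) ≤ if R i j then 1 else 0 := by split_ifs <;> norm_num
  exact mul_nonneg (mul_nonneg this (hx i)) (hx j)

variable [Fintype ι]

lemma quadForm_nonneg (hx : 0 ≤ x) : 0 ≤ quadForm R x :=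
  sum_nonneg fun i _ => sum_nonneg fun j _ => quadForm_term_nonneg hx i j

lemma sq_le_quadForm (hx : 0 ≤ x) {i : ι} (hi : R i i) : x i ^ 2 ≤ quadForm R x := by
  calc x i ^ 2 = (if R i i then (1 : ℝ) else 0) * x i * x i := by simp [hi, sq]
    _ ≤ ∑ j, (if R i j then (1 : ℝ) else 0) * x i * x j :=
      single_le_sum (fun j _ => quadForm_term_nonneg hx i j) (mem_univ i)
    _ ≤ quadForm R x :=
      single_le_sum (fun k _ => sum_nonneg fun j _ => quadForm_term_nonneg hx k j) (mem_univ i)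

lemma quadForm_pos_of_reflexive (hR : ∀ i, R i i) (hx : x ∈ stdSimplex ℝ ι) :
    0 < quadForm R x := by
  obtain ⟨i, -, hi⟩ : ∃ i ∈ univ, (0 : ι → ℝ) i < x i :=
    exists_lt_of_sum_lt (by simp [hx.2])
  exact (pow_pos hi 2).trans_le (sq_le_quadForm hx.1 (hR i))

lemma quadForm_single_eq_zero [DecidableEq ι] {i : ι} (hi : ¬ R i i) :
    quadForm R (Pi.single i 1) = 0 := by
  simp [quadForm, Pi.single_apply, hi]

end

theorem stmt2_general (n : ℕ) (R : Fin n → Fin n → Prop) (m : ℝ)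
    (hm : IsLeast (quadForm R '' stdSimplex ℝ (Fin n)) m) :
    m = 0 ↔ ∃ i, ¬ R i i := by
  obtain ⟨⟨x, hx, rfl⟩, hmin⟩ := hm
  constructor
  · intro hzero
    by_contra! hR
    exact (quadForm_pos_of_reflexive hR hx).ne' hzero
  · rintro ⟨i, hi⟩
    have hle : quadForm R x ≤ 0 :=
      (hmin ⟨_, single_mem_stdSimplex ℝ i, rfl⟩).trans_eq (quadForm_single_eq_zero hi)
    exact le_antisymm hle (quadForm_nonneg hx.1)

/-- `‖R‖ = 0` iff `R` is not reflexive. -/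
theorem stmt2 (n : ℕ) (hn : 0 < n) (R : Fin n → Fin n → Prop) (m : ℝ)
    (hm : IsLeast (quadForm R '' stdSimplex ℝ (Fin n)) m) :
    m = 0 ↔ ∃ i, ¬ R i i :=
  stmt2_general n R m hm
end

section
/- Let R be a reflexive binary relation on S = {1,...,n} and let x̄ = (x_1,...,x_n) be a minimal vector for f_R on the standard simplex with all coordinates strictly positive. Then for all α, β ∈ S, Σ_{i=1}^n r_{iα} x_i = Σ_{i=1}^n r_{iβ} x_i, where r_{ij} = R(i,j) + R(j,i). -/
open Finset
open scoped Classical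

noncomputable def rSym {ι : Type*} (R : ι → ι → Prop) (i j : ι) : ℝ :=
  (if R i j then (1 : ℝ) else 0) + (if R j i then (1 : ℝ) else 0)

/-!
Since `x` is strictly positive, the segment `x + t (e_α - e_β)` stays in the simplex for small
`|t|`, so `t ↦ f_R (x + t (e_α - e_β))` has a local minimum at `0`. Its derivative there is
`Σ_i r_{iα} x_i - Σ_i r_{iβ} x_i`, which therefore vanishes.
-/

open Filter Topology

section

variable {ι : Type*} [Fintype ι] (R : ι → ι → Prop)

theorem quadForm_add_smul (x d : ι → ℝ) (t : ℝ) :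
    quadForm R (x + t • d) =
      quadForm R x + t * ∑ j, (∑ i, rSym R i j * x i) * d j + t ^ 2 * quadForm R d := by
  set a : ι → ι → ℝ := fun i j => if R i j then 1 else 0
  have hcross : ∑ j, (∑ i, rSym R i j * x i) * d j =
      ∑ i, ∑ j, a i j * x i * d j + ∑ i, ∑ j, a i j * d i * x j := by
    rw [sum_comm (f := fun i j => a i j * x i * d j), ← sum_add_distrib]
    refine sum_congr rfl fun j _ => ?_
    rw [sum_mul, ← sum_add_distrib]
    exact sum_congr rfl fun i _ => by simp only [rSym, a]; ring
  rw [hcross]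
  simp only [quadForm, mul_add, mul_sum, ← sum_add_distrib]
  exact sum_congr rfl fun i _ => sum_congr rfl fun j _ => by
    simp only [Pi.add_apply, Pi.smul_apply, smul_eq_mul, a]
    ring

theorem hasDerivAt_quadForm_add_smul (x d : ι → ℝ) :
    HasDerivAt (fun t : ℝ => quadForm R (x + t • d)) (∑ j, (∑ i, rSym R i j * x i) * d j) 0 := by
  rw [funext (quadForm_add_smul R x d)]
  exact ((((hasDerivAt_id' 0).mul_const _).const_add _).add
    ((hasDerivAt_pow 2 0).mul_const _)).congr_deriv (by simp)

end

theorem eventually_add_smul_mem_stdSimplex {ι : Type*} [Fintype ι] {x : ι → ℝ}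
    (hx : x ∈ stdSimplex ℝ ι) (hpos : ∀ i, 0 < x i) {d : ι → ℝ} (hd : ∑ i, d i = 0) :
    ∀ᶠ t in 𝓝 (0 : ℝ), x + t • d ∈ stdSimplex ℝ ι := by
  have hcoord : ∀ i, ∀ᶠ t in 𝓝 (0 : ℝ), 0 < x i + t * d i := fun i => by
    have : Continuous fun t : ℝ => x i + t * d i := by fun_prop
    exact continuousAt_const.eventually_lt this.continuousAt (by simpa using hpos i)
  filter_upwards [eventually_all.2 hcoord] with t ht
  refine ⟨fun i => (ht i).le, ?_⟩
  simp [sum_add_distrib, ← mul_sum, hd, hx.2]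

theorem stmt3_general (n : ℕ) (R : Fin n → Fin n → Prop)
    (x : Fin n → ℝ) (hx : x ∈ stdSimplex ℝ (Fin n))
    (hmin : ∀ y ∈ stdSimplex ℝ (Fin n), quadForm R x ≤ quadForm R y)
    (hpos : ∀ i, 0 < x i) (α β : Fin n) :
    ∑ i, rSym R i α * x i = ∑ i, rSym R i β * x i := by
  set d : Fin n → ℝ := Pi.single α 1 - Pi.single β 1
  have hd : ∑ i, d i = 0 := by simp [d, sum_sub_distrib]
  have hlocal : IsLocalMin (fun t : ℝ => quadForm R (x + t • d)) 0 := by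
    filter_upwards [eventually_add_smul_mem_stdSimplex hx hpos hd] with t ht
    simpa using hmin _ ht
  have hcrit := hlocal.hasDerivAt_eq_zero (hasDerivAt_quadForm_add_smul R x d)
  simpa [d, mul_sub, sum_sub_distrib, sub_eq_zero, Pi.single_apply] using hcrit

/-- Lemma 1: at a strictly positive minimal vector, all the partial sums
`Σ_i r_{iα} x_i` coincide. -/
theorem stmt3 (n : ℕ) (R : Fin n → Fin n → Prop) (hrefl : ∀ i, R i i)
    (x : Fin n → ℝ) (hx : x ∈ stdSimplex ℝ (Fin n))
    (hmin : ∀ y ∈ stdSimplex ℝ (Fin n), quadForm R x ≤ quadForm R y)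
    (hpos : ∀ i, 0 < x i) (α β : Fin n) :
    ∑ i, rSym R i α * x i = ∑ i, rSym R i β * x i :=
  stmt3_general n R x hx hmin hpos α β
end

section
/- Let R₁ and R₂ be reflexive binary relations on disjoint finite sets S₁ and S₂, and let R = R₁ ⊔ R₂ be the induced relation on the disjoint union S₁ ⊔ S₂ (no pair between S₁ and S₂ is related). Then ‖R₁ ⊔ R₂‖⁻¹ = ‖R₁‖⁻¹ + ‖R₂‖⁻¹. -/
/-!
The quadratic form of `R₁ ⊔ R₂` is the sum of the forms of `R₁` and `R₂` on the two blocks, and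
each form is homogeneous of degree two. A point of the simplex putting mass `t` on the first block
therefore has value at least `t² m₁ + (1 - t)² m₂`, with equality for suitably scaled minimisers;
over `t` this is minimised at `t = m₂ / (m₁ + m₂)`, with value `m₁ m₂ / (m₁ + m₂)`, whose inverse
is `m₁⁻¹ + m₂⁻¹`.
-/

open Finset
open scoped Classical

section QuadForm

variable {ι κ : Type*} [Fintype ι] [Fintype κ]

lemma quadForm_smul (R : ι → ι → Prop) (c : ℝ) (x : ι → ℝ) :
    quadForm R (c • x) = c ^ 2 * quadForm R x := by
  simp only [quadForm, Pi.smul_apply, smul_eq_mul, mul_sum]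
  exact sum_congr rfl fun i _ => sum_congr rfl fun j _ => by ring

lemma sum_sq_le_quadForm {R : ι → ι → Prop} (hrefl : ∀ i, R i i) {x : ι → ℝ} (hx : 0 ≤ x) :
    ∑ i, x i ^ 2 ≤ quadForm R x := by
  refine sum_le_sum fun i _ => ?_
  have hterm : ∀ j, 0 ≤ (if R i j then (1 : ℝ) else 0) * x i * x j := fun j =>
    mul_nonneg (mul_nonneg (by split_ifs <;> norm_num) (hx i)) (hx j)
  simpa [hrefl i, sq] using single_le_sum (fun j _ => hterm j) (mem_univ i)

lemma IsLeast.quadForm_pos {R : ι → ι → Prop} (hrefl : ∀ i, R i i) {m : ℝ}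
    (hm : IsLeast (quadForm R '' stdSimplex ℝ ι) m) : 0 < m := by
  obtain ⟨x, ⟨hx0, hx1⟩, rfl⟩ := hm.1
  obtain ⟨i, hi⟩ : ∃ i, x i ≠ 0 := by
    by_contra! h
    simp [h] at hx1
  refine (sum_pos' (fun j _ => sq_nonneg (x j)) ⟨i, mem_univ i, by positivity⟩).trans_le ?_
  exact sum_sq_le_quadForm hrefl hx0

lemma IsLeast.sq_sum_mul_le_quadForm {R : ι → ι → Prop} {m : ℝ}
    (hm : IsLeast (quadForm R '' stdSimplex ℝ ι) m) {z : ι → ℝ} (hz : 0 ≤ z) :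
    (∑ i, z i) ^ 2 * m ≤ quadForm R z := by
  set s := ∑ i, z i with hs_def
  have hs0 : 0 ≤ s := sum_nonneg fun i _ => hz i
  rcases hs0.eq_or_lt with hs | hs
  · have hz0 : z = 0 := funext fun i =>
      (sum_eq_zero_iff_of_nonneg fun j _ => hz j).1 hs.symm i (mem_univ i)
    rw [← hs]
    simp [hz0, quadForm]
  · have hmem : s⁻¹ • z ∈ stdSimplex ℝ ι :=
      ⟨fun i => mul_nonneg (inv_nonneg.2 hs.le) (hz i), by
        simp only [Pi.smul_apply, smul_eq_mul, ← mul_sum, ← hs_def, inv_mul_cancel₀ hs.ne']⟩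
    calc s ^ 2 * m ≤ s ^ 2 * quadForm R (s⁻¹ • z) := by gcongr; exact hm.2 ⟨_, hmem, rfl⟩
      _ = quadForm R z := by rw [← quadForm_smul, smul_smul, mul_inv_cancel₀ hs.ne', one_smul]

lemma quadForm_sumLiftRel (R₁ : ι → ι → Prop) (R₂ : κ → κ → Prop) (y : ι ⊕ κ → ℝ) :
    quadForm (Sum.LiftRel R₁ R₂) y =
      quadForm R₁ (y ∘ Sum.inl) + quadForm R₂ (y ∘ Sum.inr) := by
  simp [quadForm, Fintype.sum_sum_type]

lemma sumElim_smul_mem_stdSimplex {x₁ : ι → ℝ} {x₂ : κ → ℝ} (hx₁ : x₁ ∈ stdSimplex ℝ ι)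
    (hx₂ : x₂ ∈ stdSimplex ℝ κ) {t : ℝ} (ht₀ : 0 ≤ t) (ht₁ : t ≤ 1) :
    Sum.elim (t • x₁) ((1 - t) • x₂) ∈ stdSimplex ℝ (ι ⊕ κ) := by
  refine ⟨fun a => ?_, ?_⟩
  · cases a with
    | inl i => exact mul_nonneg ht₀ (hx₁.1 i)
    | inr j => exact mul_nonneg (sub_nonneg.2 ht₁) (hx₂.1 j)
  · simp only [Fintype.sum_sum_type, Sum.elim_inl, Sum.elim_inr, Pi.smul_apply, smul_eq_mul,
      ← mul_sum, hx₁.2, hx₂.2]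
    ring

end QuadForm

lemma mul_div_add_le_sq_mul_add_one_sub_sq_mul {a b : ℝ} (ha : 0 < a) (hb : 0 < b) (t : ℝ) :
    a * b / (a + b) ≤ t ^ 2 * a + (1 - t) ^ 2 * b := by
  rw [div_le_iff₀ (by positivity)]
  nlinarith [sq_nonneg (a * t - b * (1 - t))]

theorem isLeast_quadForm_sumLiftRel {ι κ : Type*} [Fintype ι] [Fintype κ]
    {R₁ : ι → ι → Prop} {R₂ : κ → κ → Prop} {m₁ m₂ : ℝ}
    (hm₁ : IsLeast (quadForm R₁ '' stdSimplex ℝ ι) m₁)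
    (hm₂ : IsLeast (quadForm R₂ '' stdSimplex ℝ κ) m₂) (hp₁ : 0 < m₁) (hp₂ : 0 < m₂) :
    IsLeast (quadForm (Sum.LiftRel R₁ R₂) '' stdSimplex ℝ (ι ⊕ κ)) (m₁ * m₂ / (m₁ + m₂)) := by
  constructor
  · obtain ⟨x₁, hx₁, hq₁⟩ := hm₁.1
    obtain ⟨x₂, hx₂, hq₂⟩ := hm₂.1
    set t := m₂ / (m₁ + m₂) with ht
    have ht₁ : t ≤ 1 := (div_le_one (by positivity)).2 (by linarith)
    refine ⟨_, sumElim_smul_mem_stdSimplex hx₁ hx₂ (by positivity) ht₁, ?_⟩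
    rw [quadForm_sumLiftRel, Sum.elim_comp_inl, Sum.elim_comp_inr, quadForm_smul, quadForm_smul,
      hq₁, hq₂, ht]
    field_simp
    ring
  · rintro _ ⟨y, ⟨hy0, hy1⟩, rfl⟩
    have hsum : ∑ j, y (Sum.inr j) = 1 - ∑ i, y (Sum.inl i) := by
      rw [Fintype.sum_sum_type] at hy1; linarith
    have hq₁ := hm₁.sq_sum_mul_le_quadForm (z := y ∘ Sum.inl) fun i => hy0 _
    have hq₂ := hm₂.sq_sum_mul_le_quadForm (z := y ∘ Sum.inr) fun j => hy0 _
    simp only [Function.comp_apply, hsum] at hq₁ hq₂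
    rw [quadForm_sumLiftRel]
    linarith [mul_div_add_le_sq_mul_add_one_sub_sq_mul hp₁ hp₂ (∑ i, y (Sum.inl i))]

theorem stmt5_general (n₁ n₂ : ℕ)
    (R₁ : Fin n₁ → Fin n₁ → Prop) (R₂ : Fin n₂ → Fin n₂ → Prop)
    (hrefl₁ : ∀ i, R₁ i i) (hrefl₂ : ∀ i, R₂ i i)
    (R : (Fin n₁ ⊕ Fin n₂) → (Fin n₁ ⊕ Fin n₂) → Prop)
    (hR : ∀ a b, R a b ↔ (∃ i j, a = Sum.inl i ∧ b = Sum.inl j ∧ R₁ i j) ∨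
                         (∃ i j, a = Sum.inr i ∧ b = Sum.inr j ∧ R₂ i j))
    (m₁ m₂ m : ℝ)
    (hm₁ : IsLeast (quadForm R₁ '' stdSimplex ℝ (Fin n₁)) m₁)
    (hm₂ : IsLeast (quadForm R₂ '' stdSimplex ℝ (Fin n₂)) m₂)
    (hm : IsLeast (quadForm R '' stdSimplex ℝ (Fin n₁ ⊕ Fin n₂)) m) :
    m⁻¹ = m₁⁻¹ + m₂⁻¹ := by
  have hp₁ := hm₁.quadForm_pos hrefl₁
  have hp₂ := hm₂.quadForm_pos hrefl₂
  obtain rfl : R = Sum.LiftRel R₁ R₂ := by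
    funext a b
    rw [hR]
    cases a <;> cases b <;> simp
  rw [hm.unique (isLeast_quadForm_sumLiftRel hm₁ hm₂ hp₁ hp₂)]
  field_simp
  ring

/-- Lemma 3: the inverse norm is additive on disjoint unions:
`‖R₁ ⊔ R₂‖⁻¹ = ‖R₁‖⁻¹ + ‖R₂‖⁻¹`. -/
theorem stmt5 (n₁ n₂ : ℕ) (h₁ : 0 < n₁) (h₂ : 0 < n₂)
    (R₁ : Fin n₁ → Fin n₁ → Prop) (R₂ : Fin n₂ → Fin n₂ → Prop)
    (hrefl₁ : ∀ i, R₁ i i) (hrefl₂ : ∀ i, R₂ i i)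
    (R : (Fin n₁ ⊕ Fin n₂) → (Fin n₁ ⊕ Fin n₂) → Prop)
    (hR : ∀ a b, R a b ↔ (∃ i j, a = Sum.inl i ∧ b = Sum.inl j ∧ R₁ i j) ∨
                         (∃ i j, a = Sum.inr i ∧ b = Sum.inr j ∧ R₂ i j))
    (m₁ m₂ m : ℝ)
    (hm₁ : IsLeast (quadForm R₁ '' stdSimplex ℝ (Fin n₁)) m₁)
    (hm₂ : IsLeast (quadForm R₂ '' stdSimplex ℝ (Fin n₂)) m₂)
    (hm : IsLeast (quadForm R '' stdSimplex ℝ (Fin n₁ ⊕ Fin n₂)) m) :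
    m⁻¹ = m₁⁻¹ + m₂⁻¹ :=
  stmt5_general n₁ n₂ R₁ R₂ hrefl₁ hrefl₂ R hR m₁ m₂ m hm₁ hm₂ hm
end

section
/- Let L_n be a linearly ordered set (chain) of cardinality n with the relation ≤. Then the norm of ≤ equals (n+1)/(2n), equivalently P(L_n) := ‖≤‖⁻¹ = 2n/(n+1) = 1 + (n-1)/(n+1). -/
/-!
For a total antisymmetric relation exactly one of `R i j`, `R j i` holds when `i ≠ j`, and both
hold when `i = j`; symmetrising the form therefore gives `2 f_R(x) = (Σ x_i)² + Σ x_i²`.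
On the simplex `Σ x_i = 1`, and by Cauchy–Schwarz `Σ x_i² ≥ 1/n` with equality at the barycenter,
so the minimum of `f_R` is `(1 + 1/n)/2 = (n+1)/(2n)`.
-/

open Finset
open scoped Classical

section TotalAntisymm

variable {ι : Type*} {R : ι → ι → Prop}

lemma ite_add_ite_swap_of_total_of_antisymm (htotal : ∀ i j, R i j ∨ R j i)
    (hanti : ∀ i j, R i j → R j i → i = j) (i j : ι) :
    ((if R i j then (1 : ℝ) else 0) + if R j i then 1 else 0) = 1 + if i = j then 1 else 0 := by
  by_cases hij : i = j
  · subst hij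
    have hii : R i i := (htotal i i).elim id id
    simp only [hii, if_true]
  · rcases htotal i j with h | h
    · have h' : ¬R j i := fun h' => hij (hanti i j h h')
      simp [h, h', hij]
    · have h' : ¬R i j := fun h' => hij (hanti i j h' h)
      simp [h, h', hij]

theorem two_mul_quadForm_of_total_of_antisymm [Fintype ι] (htotal : ∀ i j, R i j ∨ R j i)
    (hanti : ∀ i j, R i j → R j i → i = j) (x : ι → ℝ) :
    2 * quadForm R x = (∑ i, x i) ^ 2 + ∑ i, x i ^ 2 := by
  calc 2 * quadForm R x
      = ∑ i, ∑ j, ((if R i j then (1 : ℝ) else 0) + if R j i then 1 else 0) * x i * x j := by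
        rw [two_mul]
        nth_rw 2 [quadForm]
        rw [sum_comm, quadForm, ← sum_add_distrib]
        refine sum_congr rfl fun i _ => ?_
        rw [← sum_add_distrib]
        exact sum_congr rfl fun j _ => by ring
    _ = ∑ i, ∑ j, (1 + if i = j then (1 : ℝ) else 0) * x i * x j := by
        simp_rw [ite_add_ite_swap_of_total_of_antisymm htotal hanti]
    _ = (∑ i, x i) ^ 2 + ∑ i, x i ^ 2 := by
        simp [add_mul, sum_add_distrib, sq, sum_mul_sum]

end TotalAntisymm

theorem inv_card_le_sum_sq_of_mem_stdSimplex {ι : Type*} [Fintype ι] {x : ι → ℝ}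
    (hx : x ∈ stdSimplex ℝ ι) : (Fintype.card ι : ℝ)⁻¹ ≤ ∑ i, x i ^ 2 := by
  have hcs : (∑ i, x i) ^ 2 ≤ #(univ : Finset ι) * ∑ i, x i ^ 2 := sq_sum_le_card_mul_sum_sq
  rw [hx.2, card_univ, one_pow] at hcs
  have hcard : (0 : ℝ) < Fintype.card ι := by
    by_contra h
    nlinarith [sum_nonneg fun i (_ : i ∈ univ) => sq_nonneg (x i)]
  rwa [inv_le_iff_one_le_mul₀' hcard]

theorem isLeast_quadForm_stdSimplex_of_total_of_antisymm {ι : Type*} [Fintype ι] [Nonempty ι]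
    {R : ι → ι → Prop} (htotal : ∀ i j, R i j ∨ R j i) (hanti : ∀ i j, R i j → R j i → i = j) :
    IsLeast (quadForm R '' stdSimplex ℝ ι) ((1 + (Fintype.card ι : ℝ)⁻¹) / 2) := by
  have hform := two_mul_quadForm_of_total_of_antisymm htotal hanti
  refine ⟨⟨_, stdSimplex.barycenter.2, ?_⟩, ?_⟩
  · have hcard : (Fintype.card ι : ℝ) ≠ 0 := by positivity
    have hb := hform stdSimplex.barycenter.1
    simp only [stdSimplex.barycenter_apply, sum_const, card_univ, nsmul_eq_mul] at hb
    field_simp at hb ⊢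
    linarith
  · rintro _ ⟨x, hx, rfl⟩
    have hsq := inv_card_le_sum_sq_of_mem_stdSimplex hx
    have hform_x := hform x
    rw [hx.2] at hform_x
    linarith

/-- Lemma 4: for the chain `L_n`, `‖≤‖ = (n+1)/(2n)` and `P(L_n) = 2n/(n+1)`. -/
theorem stmt6 (n : ℕ) (hn : 1 ≤ n) (m : ℝ)
    (hm : IsLeast (quadForm (fun i j : Fin n => i ≤ j) '' stdSimplex ℝ (Fin n)) m) :
    m = ((n : ℝ) + 1) / (2 * n) ∧ m⁻¹ = 2 * n / (n + 1) := by
  have : Nonempty (Fin n) := ⟨⟨0, hn⟩⟩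
  have hleast := isLeast_quadForm_stdSimplex_of_total_of_antisymm
    (R := fun i j : Fin n => i ≤ j) le_total fun _ _ => le_antisymm
  rw [Fintype.card_fin] at hleast
  have hm_eq : m = ((n : ℝ) + 1) / (2 * n) := by
    rw [hm.unique hleast]
    have hn0 : (n : ℝ) ≠ 0 := by positivity
    field_simp
  exact ⟨hm_eq, by rw [hm_eq, inv_div]⟩
end

section
/- If R is an equivalence relation on a finite set S, then P(S,R) := ‖R‖⁻¹ equals the number of equivalence classes of R. -/
/-!
Collapsing each equivalence class to its total mass `y_c = ∑_{i ∈ c} x_i` turns the quadratic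
form into `f_R(x) = ∑_c y_c²`, while `∑_c y_c = 1` on the simplex. By Cauchy–Schwarz
`∑_c y_c² ≥ 1/k` for `k` classes, with equality when every class carries mass `1/k`.
-/

open Finset
open scoped Classical

namespace Fiberwise

variable {ι κ : Type*} [Fintype ι] [Fintype κ]

noncomputable def fiberSum (g : ι → κ) (x : ι → ℝ) (c : κ) : ℝ :=
  ∑ i with g i = c, x i

noncomputable def uniformOnFibers (g : ι → κ) (i : ι) : ℝ :=
  ((Fintype.card κ : ℝ) * #{j | g j = g i})⁻¹

variable (g : ι → κ)

theorem sum_fiberSum (x : ι → ℝ) : ∑ c, fiberSum g x c = ∑ i, x i :=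
  sum_fiberwise _ g x

theorem sum_sq_fiberSum (x : ι → ℝ) :
    ∑ c, fiberSum g x c ^ 2 = ∑ i, ∑ j, (if g i = g j then (1 : ℝ) else 0) * x i * x j := by
  calc ∑ c, fiberSum g x c ^ 2
      = ∑ c, ∑ i with g i = c, x i * fiberSum g x (g i) := by
        refine sum_congr rfl fun c _ => ?_
        rw [sq, fiberSum, sum_mul]
        exact sum_congr rfl fun i hi => by rw [(mem_filter.mp hi).2]; rfl
    _ = ∑ i, x i * fiberSum g x (g i) := sum_fiberwise _ g _
    _ = ∑ i, ∑ j, (if g i = g j then (1 : ℝ) else 0) * x i * x j := by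
        refine sum_congr rfl fun i _ => ?_
        simp only [fiberSum, mul_sum, sum_filter, ite_mul, one_mul, zero_mul, mul_ite, mul_zero,
          eq_comm]

theorem one_le_card_mul_sum_sq_fiberSum {x : ι → ℝ} (hx : x ∈ stdSimplex ℝ ι) :
    1 ≤ Fintype.card κ * ∑ c, fiberSum g x c ^ 2 := by
  have h := sq_sum_le_card_mul_sum_sq (s := univ) (f := fiberSum g x)
  rwa [sum_fiberSum, hx.2, one_pow, card_univ] at h

variable {g}

theorem fiberSum_uniformOnFibers (hg : Function.Surjective g) (c : κ) :
    fiberSum g (uniformOnFibers g) c = (Fintype.card κ : ℝ)⁻¹ := by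
  obtain ⟨i, rfl⟩ := hg c
  have hfiber : (#{j | g j = g i} : ℝ) ≠ 0 := by
    exact_mod_cast (card_pos.mpr ⟨i, by simp⟩).ne'
  calc fiberSum g (uniformOnFibers g) (g i)
      = ∑ j with g j = g i, ((Fintype.card κ : ℝ) * #{j | g j = g i})⁻¹ :=
        sum_congr rfl fun j hj => by rw [uniformOnFibers, (mem_filter.mp hj).2]
    _ = (Fintype.card κ : ℝ)⁻¹ := by
        rw [sum_const, nsmul_eq_mul, mul_inv, mul_left_comm, mul_inv_cancel₀ hfiber, mul_one]

theorem uniformOnFibers_mem_stdSimplex [Nonempty κ] (hg : Function.Surjective g) :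
    uniformOnFibers g ∈ stdSimplex ℝ ι := by
  refine ⟨fun i => by unfold uniformOnFibers; positivity, ?_⟩
  rw [← sum_fiberSum g, sum_congr rfl fun c _ => fiberSum_uniformOnFibers hg c, sum_const,
    card_univ, nsmul_eq_mul, mul_inv_cancel₀ (by exact_mod_cast Fintype.card_ne_zero)]

theorem sum_sq_fiberSum_uniformOnFibers [Nonempty κ] (hg : Function.Surjective g) :
    ∑ c, fiberSum g (uniformOnFibers g) c ^ 2 = (Fintype.card κ : ℝ)⁻¹ := by
  have hκ : (Fintype.card κ : ℝ) ≠ 0 := by exact_mod_cast Fintype.card_ne_zero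
  rw [sum_congr rfl fun c _ => by rw [fiberSum_uniformOnFibers hg c], sum_const, card_univ,
    nsmul_eq_mul, inv_pow, sq, mul_inv, mul_inv_cancel_left₀ hκ]

end Fiberwise

open Fiberwise

theorem quadForm_eq_sum_sq_fiberSum {ι : Type*} [Fintype ι] {R : ι → ι → Prop}
    [Fintype (Quot R)] (hR : Equivalence R) (x : ι → ℝ) :
    quadForm R x = ∑ c, fiberSum (Quot.mk R) x c ^ 2 := by
  simp only [sum_sq_fiberSum, hR.quot_mk_eq_iff, quadForm]

theorem isLeast_quadForm_image_stdSimplex {ι : Type*} [Fintype ι] [Nonempty ι]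
    {R : ι → ι → Prop} (hR : Equivalence R) :
    IsLeast (quadForm R '' stdSimplex ℝ ι) (Nat.card (Quot R) : ℝ)⁻¹ := by
  have : Fintype (Quot R) := Fintype.ofSurjective _ Quot.mk_surjective
  have : Nonempty (Quot R) := Nonempty.map (Quot.mk R) ‹_›
  rw [Nat.card_eq_fintype_card]
  refine ⟨⟨uniformOnFibers (Quot.mk R), uniformOnFibers_mem_stdSimplex Quot.mk_surjective, ?_⟩,
    ?_⟩
  · rw [quadForm_eq_sum_sq_fiberSum hR, sum_sq_fiberSum_uniformOnFibers Quot.mk_surjective]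
  · rintro _ ⟨x, hx, rfl⟩
    rw [quadForm_eq_sum_sq_fiberSum hR, inv_le_iff_one_le_mul₀' (by positivity)]
    exact one_le_card_mul_sum_sq_fiberSum (Quot.mk R) hx

/-- For an equivalence relation, `P(S,R) = ‖R‖⁻¹` equals the number of
equivalence classes. -/
theorem stmt8 (n : ℕ) (hn : 0 < n) (R : Fin n → Fin n → Prop)
    (hR : Equivalence R) (m : ℝ)
    (hm : IsLeast (quadForm R '' stdSimplex ℝ (Fin n)) m) :
    m⁻¹ = Nat.card (Quot R) := by
  have : Nonempty (Fin n) := ⟨⟨0, hn⟩⟩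
  rw [hm.unique (isLeast_quadForm_image_stdSimplex hR), inv_inv]
end

section
/- Let S be a primitive poset consisting of t pairwise incomparable chains of cardinalities n₁,...,n_t (the disjoint/cardinal sum of chains). Then P(S) = Σ_{i=1}^t (1 + (n_i - 1)/(n_i + 1)) = Σ_{i=1}^t 2n_i/(n_i+1). -/
open Finset
open scoped Classical

/-!
On a chain of length `N` the form equals `((Σ x)² + Σ x²) / 2`, so Cauchy–Schwarz gives
`(Σ x)² ≤ c_N · f(x)` with `c_N = 2N/(N+1)`, with equality for constant `x`. The form of the
disjoint union is the sum of the forms of the chains, and a weighted Cauchy–Schwarz across the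
chains yields `1 ≤ (Σ_k c_{n_k}) · f(x)` on the simplex. Equality holds when chain `k` carries
total mass `c_{n_k} / Σ_j c_{n_j}`, spread uniformly.
-/

theorem quadForm_flip {ι : Type*} [Fintype ι] (R : ι → ι → Prop) (x : ι → ℝ) :
    quadForm (flip R) x = quadForm R x := by
  unfold quadForm
  rw [Finset.sum_comm]
  exact sum_congr rfl fun i _ => sum_congr rfl fun j _ => by
    by_cases h : R i j <;> simp [flip, h, mul_comm]

theorem quadForm_add {ι : Type*} [Fintype ι] (R S : ι → ι → Prop) (x : ι → ℝ) :
    quadForm R x + quadForm S x =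
      ∑ i, ∑ j, ((if R i j then (1 : ℝ) else 0) + if S i j then 1 else 0) * x i * x j := by
  simp only [quadForm, ← sum_add_distrib, add_mul]

theorem quadForm_le {ι : Type*} [Fintype ι] [LinearOrder ι] (x : ι → ℝ) :
    quadForm (· ≤ ·) x = ((∑ i, x i) ^ 2 + ∑ i, x i ^ 2) / 2 := by
  have h2 : 2 * quadForm (· ≤ ·) x = (∑ i, x i) ^ 2 + ∑ i, x i ^ 2 := by
    conv_lhs => rw [two_mul]; enter [2]; rw [← quadForm_flip]
    rw [quadForm_add, sq, sum_mul_sum, ← sum_add_distrib]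
    refine sum_congr rfl fun i _ => ?_
    have hdiag : x i ^ 2 = ∑ j, if i = j then x i * x j else 0 := by simp [sq]
    rw [hdiag, ← sum_add_distrib]
    refine sum_congr rfl fun j _ => ?_
    rcases lt_trichotomy i j with h | rfl | h
    · simp [flip, h.le, h.not_ge, h.ne]
    · simp only [le_refl, ↓reduceIte, flip]; ring
    · simp [flip, h.le, h.not_ge, h.ne']
  linarith

theorem sq_sum_le_mul_quadForm_le {ι : Type*} [Fintype ι] [LinearOrder ι] (x : ι → ℝ) :
    (∑ i, x i) ^ 2 ≤ 2 * (Fintype.card ι : ℝ) / (Fintype.card ι + 1) * quadForm (· ≤ ·) x := by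
  have hCS : (∑ i, x i) ^ 2 ≤ Fintype.card ι * ∑ i, x i ^ 2 := by
    simpa using sq_sum_le_card_mul_sum_sq (s := univ) (f := x)
  rw [quadForm_le, div_mul_eq_mul_div, le_div_iff₀ (by positivity)]
  nlinarith

theorem quadForm_le_const {ι : Type*} [Fintype ι] [LinearOrder ι] (v : ℝ) :
    quadForm (· ≤ ·) (fun _ : ι => v) = Fintype.card ι * (Fintype.card ι + 1) / 2 * v ^ 2 := by
  rw [quadForm_le]
  simp only [sum_const, card_univ, nsmul_eq_mul]
  ring

theorem quadForm_sigma {κ : Type*} [Fintype κ] {α : κ → Type*} [∀ k, Fintype (α k)]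
    (R : (Σ k, α k) → (Σ k, α k) → Prop) (hR : ∀ a b, R a b → a.1 = b.1)
    (x : (Σ k, α k) → ℝ) :
    quadForm R x = ∑ k, quadForm (fun i j => R ⟨k, i⟩ ⟨k, j⟩) (fun i => x ⟨k, i⟩) := by
  unfold quadForm
  rw [← univ_sigma_univ, sum_sigma]
  refine sum_congr rfl fun k _ => sum_congr rfl fun i _ => ?_
  rw [sum_sigma, sum_eq_single k]
  · intro l _ hl
    exact sum_eq_zero fun j _ => by simp [show ¬ R ⟨k, i⟩ ⟨l, j⟩ from fun h => hl (hR _ _ h).symm]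
  · simp

section ChainSum

variable {κ : Type*} (n : κ → ℕ)

def chainSumRel (a b : Σ k, Fin (n k)) : Prop :=
  a.1 = b.1 ∧ (a.2 : ℕ) ≤ (b.2 : ℕ)

variable [Fintype κ]

noncomputable def chainSumConst : ℝ :=
  ∑ k, 2 * (n k : ℝ) / (n k + 1)

noncomputable def chainSumMinimizer (a : Σ k, Fin (n k)) : ℝ :=
  2 / ((n a.1 + 1) * chainSumConst n)

theorem quadForm_chainSumRel (x : (Σ k, Fin (n k)) → ℝ) :
    quadForm (chainSumRel n) x = ∑ k, quadForm (· ≤ ·) (fun i : Fin (n k) => x ⟨k, i⟩) := by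
  rw [quadForm_sigma _ fun _ _ h => h.1]
  refine sum_congr rfl fun k _ => congrArg₂ _ ?_ rfl
  funext i j
  exact propext (and_iff_right rfl)

theorem one_le_chainSumConst_mul_quadForm {x : (Σ k, Fin (n k)) → ℝ}
    (hx : x ∈ stdSimplex ℝ (Σ k, Fin (n k))) :
    1 ≤ chainSumConst n * quadForm (chainSumRel n) x := by
  have hsum : ∑ k, ∑ i, x ⟨k, i⟩ = 1 := by
    rw [← hx.2, ← univ_sigma_univ, sum_sigma]
  have hchain := fun k => sq_sum_le_mul_quadForm_le (fun i : Fin (n k) => x ⟨k, i⟩)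
  simp only [Fintype.card_fin] at hchain
  calc (1 : ℝ) = (∑ k, ∑ i, x ⟨k, i⟩) ^ 2 := by rw [hsum, one_pow]
    _ ≤ chainSumConst n * quadForm (chainSumRel n) x := by
      rw [chainSumConst, quadForm_chainSumRel]
      refine sum_sq_le_sum_mul_sum_of_sq_le_mul _ (fun k _ => by positivity)
        (fun k _ => ?_) (fun k _ => hchain k)
      rw [quadForm_le]
      positivity

variable {n}

theorem chainSumMinimizer_mem_stdSimplex (hC : 0 < chainSumConst n) :
    chainSumMinimizer n ∈ stdSimplex ℝ (Σ k, Fin (n k)) := by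
  refine ⟨fun a => by unfold chainSumMinimizer; positivity, ?_⟩
  rw [← univ_sigma_univ, sum_sigma]
  simp only [chainSumMinimizer, sum_const, card_univ, Fintype.card_fin, nsmul_eq_mul]
  calc ∑ k, (n k : ℝ) * (2 / ((n k + 1) * chainSumConst n))
      = ∑ k, 2 * (n k : ℝ) / (n k + 1) / chainSumConst n :=
        sum_congr rfl fun k _ => by field_simp
    _ = 1 := by rw [← sum_div]; exact div_self hC.ne'

theorem quadForm_chainSumMinimizer (hC : 0 < chainSumConst n) :
    quadForm (chainSumRel n) (chainSumMinimizer n) = (chainSumConst n)⁻¹ := by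
  rw [quadForm_chainSumRel]
  simp only [chainSumMinimizer, quadForm_le_const, Fintype.card_fin]
  calc ∑ k, (n k : ℝ) * (n k + 1) / 2 * (2 / ((n k + 1) * chainSumConst n)) ^ 2
      = ∑ k, 2 * (n k : ℝ) / (n k + 1) / chainSumConst n ^ 2 :=
        sum_congr rfl fun k _ => by field_simp
    _ = (chainSumConst n)⁻¹ := by rw [← sum_div, ← chainSumConst]; field_simp

end ChainSum

theorem stmt9_general (t : ℕ) (n : Fin t → ℕ) (m : ℝ)
    (hm : IsLeast
      (quadForm (fun x y : Σ i : Fin t, Fin (n i) =>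
          x.1 = y.1 ∧ (x.2 : ℕ) ≤ (y.2 : ℕ)) ''
        stdSimplex ℝ (Σ i : Fin t, Fin (n i))) m) :
    m⁻¹ = ∑ i, 2 * (n i : ℝ) / (n i + 1) := by
  obtain ⟨x, hx, rfl⟩ := hm.1
  have hlower := one_le_chainSumConst_mul_quadForm n hx
  have hC : 0 < chainSumConst n := by
    refine lt_of_le_of_ne (sum_nonneg fun k _ => by positivity) ?_
    rintro h
    rw [← h, zero_mul] at hlower
    linarith
  have hle : quadForm (chainSumRel n) x ≤ (chainSumConst n)⁻¹ :=
    hm.2 ⟨_, chainSumMinimizer_mem_stdSimplex hC, quadForm_chainSumMinimizer hC⟩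
  have hge : (chainSumConst n)⁻¹ ≤ quadForm (chainSumRel n) x := by
    rwa [inv_le_iff_one_le_mul₀' hC]
  change (quadForm (chainSumRel n) x)⁻¹ = chainSumConst n
  rw [le_antisymm hle hge, inv_inv]

/-- For a primitive poset (disjoint union of `t` pairwise incomparable chains of
cardinalities `n₁,…,n_t`), `P(S) = Σ_i 2 n_i/(n_i+1)`. -/
theorem stmt9 (t : ℕ) (ht : 0 < t) (n : Fin t → ℕ) (hn : ∀ i, 1 ≤ n i) (m : ℝ)
    (hm : IsLeast
      (quadForm (fun x y : Σ i : Fin t, Fin (n i) =>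
          x.1 = y.1 ∧ (x.2 : ℕ) ≤ (y.2 : ℕ)) ''
        stdSimplex ℝ (Σ i : Fin t, Fin (n i))) m) :
    m⁻¹ = ∑ i, 2 * (n i : ℝ) / (n i + 1) :=
  stmt9_general t n m hm
end
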